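/- arXiv:2108.02347 — 2 statements merged into one kernel-verified Lean document; each statement's English description precedes it below -/
import Mathlib

section
/- Let p be a natural number, δ ∈ (0,1), and let g : ℝ → ℝ be (p+1)-times continuously differentiable on an open set containing the interval [1-δ, 1+δ] and satisfy g(s*t) = g(s)*g(t) for all s, t > 0. Let T₁ and T₂ be finite index sets, q : T₁ → ℝ, k : T₂ → ℝ, and k* ∈ ℝ be such that q i > k* for every i ∈ T₁ and |k j - k*| ≤ δ*(q i - k*) for every i ∈ T₁ and j ∈ T₂. Let M = sup over t ∈ [1-δ, 1+δ] of |g^{(p+1)}(t)|, where g^{(p+1)} is the (p+1)-th derivative of g. Define U : T₁ × Fin (p+1) → ℝ by U(i, m) = g(q i - k*) / (q i - k*)^m and V : T₂ × Fin (p+1) → ℝ by V(j, m) = (g^{(m)}(1) / m!) * (k* - k j)^m, where g^{(m)} denotes the m-th derivative of g. Then for all i ∈ T₁ and j ∈ T₂, |g(q i - k j) - ∑_{m=0}^{p} U(i, m) * V(j, m)| ≤ |g(q i - k*)| * M * δ^(p+1) / (p+1)!. -/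
/-!
Put `a = q i - k*` and `t = (q i - k j) / a`. The separation hypothesis gives `|t - 1| ≤ δ`, so
`t > 0` and multiplicativity splits `g (q i - k j) = g a * g t`, while `∑ₘ U (i, m) V (j, m)` is
`g a` times the degree-`p` Taylor polynomial of `g` at `1` evaluated at `t`. The error is therefore
`|g a|` times the Lagrange remainder, at most `M |t - 1| ^ (p + 1) / (p + 1)!`.
-/

open Set Nat

lemma IsCompact.le_ciSup_of_continuousOn {X α : Type*} [TopologicalSpace X]
    [ConditionallyCompleteLinearOrder α] [TopologicalSpace α] [ClosedIciTopology α] {K : Set X}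
    (hK : IsCompact K) {f : X → α} (hf : ContinuousOn f K) {y : X} (hy : y ∈ K) :
    f y ≤ ⨆ t : K, f t :=
  le_ciSup (f := fun t : K => f t) (by rw [← image_eq_range]; exact hK.bddAbove_image hf) ⟨y, hy⟩

lemma ContDiffOn.continuousOn_iteratedDeriv_of_isOpen {𝕜 F : Type*} [NontriviallyNormedField 𝕜]
    [NormedAddCommGroup F] [NormedSpace 𝕜 F] {n : ℕ} {f : 𝕜 → F} {s : Set 𝕜}
    (hf : ContDiffOn 𝕜 n f s) (hs : IsOpen s) : ContinuousOn (iteratedDeriv n f) s :=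
  (hf.continuousOn_iteratedDerivWithin le_rfl hs.uniqueDiffOn).congr
    (iteratedDerivWithin_of_isOpen hs).symm

lemma taylorWithinEval_eq_sum_iteratedDeriv {f : ℝ → ℝ} {n : ℕ} {s : Set ℝ} {x₀ : ℝ}
    (hs : UniqueDiffOn ℝ s) (hx₀ : x₀ ∈ s) (hf : ContDiffAt ℝ n f x₀) (x : ℝ) :
    taylorWithinEval f n s x₀ x =
      ∑ m ∈ Finset.range (n + 1), iteratedDeriv m f x₀ / m ! * (x - x₀) ^ m := by
  rw [taylor_within_apply]
  refine Finset.sum_congr rfl fun m hm => ?_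
  have hmn : (m : WithTop ℕ∞) ≤ n := by exact_mod_cast Finset.mem_range_succ_iff.1 hm
  rw [iteratedDerivWithin_eq_iteratedDeriv hs (hf.of_le hmn) hx₀, smul_eq_mul]
  ring

theorem abs_sub_taylor_le_of_abs_iteratedDeriv_le {f : ℝ → ℝ} {n : ℕ} {s : Set ℝ} {x₀ x C : ℝ}
    (hs : IsOpen s) (hf : ContDiffOn ℝ (n + 1) f s) (hsub : uIcc x₀ x ⊆ s)
    (hC : ∀ y ∈ uIcc x₀ x, |iteratedDeriv (n + 1) f y| ≤ C) :
    |f x - ∑ m ∈ Finset.range (n + 1), iteratedDeriv m f x₀ / m ! * (x - x₀) ^ m| ≤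
      C * |x - x₀| ^ (n + 1) / (n + 1)! := by
  rcases eq_or_ne x₀ x with rfl | hne
  · simp [Finset.sum_range_succ']
  obtain ⟨y, hy, hrem⟩ := taylor_mean_remainder_lagrange_iteratedDeriv hne (hf.mono hsub)
  rw [← taylorWithinEval_eq_sum_iteratedDeriv (uniqueDiffOn_uIcc hne) left_mem_uIcc
    ((hf.contDiffAt (hs.mem_nhds (hsub left_mem_uIcc))).of_le (by norm_cast; omega)), hrem,
    abs_div, abs_mul, abs_pow, Nat.abs_cast]
  gcongr
  exact hC y (uIoo_subset_uIcc_self hy)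

theorem lemma1_scalar_taylor_bound_general
    (p : ℕ) (δ : ℝ) (hδ : δ ∈ Set.Ioo (0 : ℝ) 1)
    (g : ℝ → ℝ)
    (s : Set ℝ) (hs : IsOpen s) (hsub : Set.Icc (1 - δ) (1 + δ) ⊆ s)
    (hg : ContDiffOn ℝ (p + 1 : ℕ) g s)
    (hmul : ∀ a b : ℝ, 0 < a → 0 < b → g (a * b) = g a * g b)
    (T₁ T₂ : Type*)
    (q : T₁ → ℝ) (k : T₂ → ℝ) (kstar : ℝ)
    (hq : ∀ i, kstar < q i)
    (hsep : ∀ i j, |k j - kstar| ≤ δ * (q i - kstar))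
    (M : ℝ)
    (hM : M = ⨆ t : Set.Icc (1 - δ) (1 + δ), |iteratedDeriv (p + 1) g t|)
    (U : T₁ × Fin (p + 1) → ℝ) (V : T₂ × Fin (p + 1) → ℝ)
    (hU : ∀ i m, U (i, m) = g (q i - kstar) / (q i - kstar) ^ (m : ℕ))
    (hV : ∀ j m, V (j, m) =
      (iteratedDeriv (m : ℕ) g 1 / (Nat.factorial (m : ℕ) : ℝ)) *
        (kstar - k j) ^ (m : ℕ)) :
    ∀ i j,
      |g (q i - k j) - ∑ m : Fin (p + 1), U (i, m) * V (j, m)| ≤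
        |g (q i - kstar)| * M * δ ^ (p + 1) / (Nat.factorial (p + 1) : ℝ) := by
  intro i j
  set a := q i - kstar
  have ha : 0 < a := sub_pos.2 (hq i)
  set t := (q i - k j) / a
  have ht_sub : t - 1 = (kstar - k j) / a := by
    rw [div_sub_one ha.ne', sub_sub_sub_cancel_left]
  have ht_dist : |t - 1| ≤ δ := by
    rw [ht_sub, abs_div, abs_of_pos ha, div_le_iff₀ ha, abs_sub_comm]
    exact hsep i j
  have ht_mem : uIcc 1 t ⊆ Icc (1 - δ) (1 + δ) := by
    rw [abs_le] at ht_dist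
    exact uIcc_subset_Icc ⟨by linarith, by linarith⟩ ⟨by linarith, by linarith⟩
  have hg_split : g (q i - k j) = g a * g t := by
    rw [← hmul a t ha (by linarith [(abs_le.1 ht_dist).1, hδ.2]), mul_div_cancel₀ _ ha.ne']
  have hsum : ∑ m : Fin (p + 1), U (i, m) * V (j, m) =
      g a * ∑ m ∈ Finset.range (p + 1), iteratedDeriv m g 1 / m ! * (t - 1) ^ m := by
    rw [Finset.mul_sum, ← Fin.sum_univ_eq_sum_range]
    refine Finset.sum_congr rfl fun m _ => ?_
    rw [hU, hV, ht_sub, div_pow]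
    ring
  have hderiv_le : ∀ y ∈ uIcc 1 t, |iteratedDeriv (p + 1) g y| ≤ M := fun y hy => hM ▸
    isCompact_Icc.le_ciSup_of_continuousOn
      ((hg.continuousOn_iteratedDeriv_of_isOpen hs).mono hsub).abs (ht_mem hy)
  have hM0 : 0 ≤ M := (abs_nonneg _).trans (hderiv_le 1 left_mem_uIcc)
  rw [hg_split, hsum, ← mul_sub, abs_mul, mul_assoc, mul_div_assoc]
  gcongr
  calc _ ≤ M * |t - 1| ^ (p + 1) / (p + 1)! :=
        abs_sub_taylor_le_of_abs_iteratedDeriv_le hs hg (ht_mem.trans hsub) hderiv_le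
    _ ≤ M * δ ^ (p + 1) / (p + 1)! := by gcongr

/-- Scalar case of Lemma 1 of the paper, with the explicit rank-(p+1)
factorization `U Vᵀ` and Lagrange-remainder error bound from its proof. -/
theorem lemma1_scalar_taylor_bound
    (p : ℕ) (δ : ℝ) (hδ : δ ∈ Set.Ioo (0 : ℝ) 1)
    (g : ℝ → ℝ)
    (s : Set ℝ) (hs : IsOpen s) (hsub : Set.Icc (1 - δ) (1 + δ) ⊆ s)
    (hg : ContDiffOn ℝ (p + 1 : ℕ) g s)
    (hmul : ∀ a b : ℝ, 0 < a → 0 < b → g (a * b) = g a * g b)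
    (T₁ T₂ : Type*) [Fintype T₁] [Fintype T₂]
    (q : T₁ → ℝ) (k : T₂ → ℝ) (kstar : ℝ)
    (hq : ∀ i, kstar < q i)
    (hsep : ∀ i j, |k j - kstar| ≤ δ * (q i - kstar))
    (M : ℝ)
    (hM : M = ⨆ t : Set.Icc (1 - δ) (1 + δ), |iteratedDeriv (p + 1) g t|)
    (U : T₁ × Fin (p + 1) → ℝ) (V : T₂ × Fin (p + 1) → ℝ)
    (hU : ∀ i m, U (i, m) = g (q i - kstar) / (q i - kstar) ^ (m : ℕ))
    (hV : ∀ j m, V (j, m) =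
      (iteratedDeriv (m : ℕ) g 1 / (Nat.factorial (m : ℕ) : ℝ)) *
        (kstar - k j) ^ (m : ℕ)) :
    ∀ i j,
      |g (q i - k j) - ∑ m : Fin (p + 1), U (i, m) * V (j, m)| ≤
        |g (q i - kstar)| * M * δ ^ (p + 1) / (Nat.factorial (p + 1) : ℝ) :=
  lemma1_scalar_taylor_bound_general p δ hδ g s hs hsub hg hmul T₁ T₂ q k kstar hq hsep M hM U V hU
    hV
end

section
/- Define elu : ℝ → ℝ by elu(t) = t if t ≥ 0 and elu(t) = exp(t) - 1 if t < 0, and define f₁, f₂, f₃ : ℝ → ℝ by f₁(t) = elu(t) + 1, f₂(t) = elu(-t) + 1, f₃(t) = tanh(t). Let N be a natural number with N ≥ 3. Then the set of vectors x ∈ ℝ^N for which the three componentwise-evaluated vectors (f₁(x₁),…,f₁(x_N)), (f₂(x₁),…,f₂(x_N)), (f₃(x₁),…,f₃(x_N)) in ℝ^N are linearly dependent has Lebesgue measure zero; equivalently, for almost every x ∈ ℝ^N these three vectors are linearly independent. -/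
/-- The exponential linear unit with parameter 1. -/
noncomputable def elu (t : ℝ) : ℝ := if t ≥ 0 then t else Real.exp t - 1

open MeasureTheory Filter Set Real
open scoped ENNReal

lemma elu_of_nonneg {t : ℝ} (h : 0 ≤ t) : elu t = t := if_pos h
lemma elu_of_nonpos {t : ℝ} (h : t ≤ 0) : elu t = Real.exp t - 1 := by
  rcases eq_or_lt_of_le h with h | h
  · subst h; simp [elu, Real.exp_zero]
  · exact if_neg (by simpa using h)

lemma continuous_elu : Continuous elu := by
  have : elu = fun t => if 0 ≤ t then t else Real.exp t - 1 := by
    funext t; rfl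
  rw [this]
  apply Continuous.if_le (by continuity) (by continuity) continuous_const continuous_id
  intro x hx; simp only [id] at hx; rw [← hx]; simp

lemma elu_add_one_pos (t : ℝ) : 0 < elu t + 1 := by
  rcases le_or_gt 0 t with h | h
  · rw [elu_of_nonneg h]; linarith
  · rw [elu_of_nonpos h.le]; have := Real.exp_pos t; linarith

lemma tanh_formula (t : ℝ) :
    Real.tanh t = (Real.exp t - Real.exp (-t)) / (Real.exp t + Real.exp (-t)) := by
  rw [Real.tanh_eq_sinh_div_cosh, Real.sinh_eq, Real.cosh_eq]
  have h : Real.exp t + Real.exp (-t) > 0 := by positivity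
  field_simp

lemma countable_of_isolated {s : Set ℝ} (h : ∀ x ∈ s, ∀ᶠ y in nhdsWithin x {x}ᶜ, y ∉ s) :
    s.Countable := by
  have hB := TopologicalSpace.isBasis_countableBasis ℝ
  have choice : ∀ x : s, ∃ b ∈ TopologicalSpace.countableBasis ℝ,
      (x : ℝ) ∈ b ∧ ∀ y ∈ b, y ≠ (x : ℝ) → y ∉ s := by
    rintro ⟨x, hx⟩
    have h1 := h x hx
    rw [eventually_nhdsWithin_iff] at h1
    obtain ⟨U, hUs, hUo, hxU⟩ := mem_nhds_iff.mp h1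
    obtain ⟨b, hbB, hxb, hbU⟩ := hB.exists_subset_of_mem_open hxU hUo
    exact ⟨b, hbB, hxb, fun y hy hne => hUs (hbU hy) (by simpa using hne)⟩
  choose F hFB hxF hFiso using choice
  have hinj : Function.Injective F := by
    intro x y hxy
    by_contra hne
    have : (y : ℝ) ∈ F x := hxy ▸ hxF y
    exact hFiso x (y : ℝ) this (fun e => hne (Subtype.ext e).symm) y.2
  have : Countable {b // b ∈ TopologicalSpace.countableBasis ℝ} :=
    (TopologicalSpace.countable_countableBasis ℝ).to_subtype
  have : Countable s := Function.Injective.countable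
    (f := fun x : s => (⟨F x, hFB x⟩ : {b // b ∈ TopologicalSpace.countableBasis ℝ}))
    (fun a b hab => hinj (by simpa using hab))
  exact Set.countable_coe_iff.mp this


-- G in formula form
noncomputable def Gfun (a b c t : ℝ) : ℝ :=
  a * (t + 1) + b * Real.exp (-t) +
    c * ((Real.exp t - Real.exp (-t)) / (Real.exp t + Real.exp (-t)))

lemma analyticOnNhd_Gfun (a b c : ℝ) : AnalyticOnNhd ℝ (Gfun a b c) Set.univ := by
  intro t _
  have he : AnalyticAt ℝ Real.exp t := analyticAt_rexp
  have hen : AnalyticAt ℝ (fun t : ℝ => Real.exp (-t)) t := (analyticAt_id.neg).rexp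
  have hden : (Real.exp t + Real.exp (-t)) ≠ 0 := by positivity
  exact ((analyticAt_const.mul (analyticAt_id.add analyticAt_const)).add
    (analyticAt_const.mul hen)).add
    (analyticAt_const.mul ((he.sub hen).div (he.add hen) hden))

lemma Gfun_eq_zero_forall {a b c : ℝ} (h : ∀ t, Gfun a b c t = 0) :
    a = 0 ∧ b = 0 ∧ c = 0 := by
  have htanh : ∀ t, Gfun a b c t = a * (t + 1) + b * Real.exp (-t) + c * Real.tanh t := by
    intro t; rw [tanh_formula]; rfl
  have key : ∀ t : ℝ, 2 * a + b * (Real.exp (-t) + Real.exp t) = 0 := by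
    intro t
    have h1 := h t
    have h2 := h (-t)
    rw [htanh] at h1 h2
    rw [Real.tanh_neg, neg_neg] at h2
    linarith
  have k0 := key 0
  have k1 := key 1
  rw [neg_zero, Real.exp_zero] at k0
  have hb : b = 0 := by
    have hgt : Real.exp (-1) + Real.exp 1 > 2 := by
      have h9 := Real.exp_one_gt_d9
      have hp : Real.exp (-1) > 0 := Real.exp_pos _
      linarith
    nlinarith
  have ha : a = 0 := by linarith [k0, hb]
  have hc : c = 0 := by
    have h1 := h 1
    rw [htanh, ha, hb] at h1
    have ht1 : Real.tanh 1 > 0 := by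
      rw [Real.tanh_eq_sinh_div_cosh]
      exact div_pos (by rw [← Real.sinh_zero]; exact Real.sinh_lt_sinh.mpr one_pos)
        (Real.cosh_pos 1)
    simp only [zero_mul, zero_add] at h1
    rcases mul_eq_zero.mp h1 with h | h
    · exact h
    · exact absurd h ht1.ne'
  exact ⟨ha, hb, hc⟩
open MeasureTheory Filter Set Real

lemma Gfun_zeroset_countable {a b c : ℝ} (h : ¬(a = 0 ∧ b = 0 ∧ c = 0)) :
    {t : ℝ | Gfun a b c t = 0}.Countable := by
  have hG := analyticOnNhd_Gfun a b c
  have hne : ∃ z, Gfun a b c z ≠ 0 := by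
    by_contra hc
    push_neg at hc
    exact h (Gfun_eq_zero_forall hc)
  apply countable_of_isolated
  intro x hx
  rcases (hG x (mem_univ x)).eventually_eq_zero_or_eventually_ne_zero with h0 | h1
  · exfalso
    obtain ⟨z, hz⟩ := hne
    have : Set.EqOn (Gfun a b c) 0 Set.univ :=
      hG.eqOn_zero_of_preconnected_of_frequently_eq_zero isPreconnected_univ (mem_univ x)
        ((h0.filter_mono nhdsWithin_le_nhds).frequently)
    exact hz (this (mem_univ z))
  · exact h1.mono fun y hy => by simpa using hy

lemma combo_null {a b c : ℝ} (h : ¬(a = 0 ∧ b = 0 ∧ c = 0)) :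
    volume {t : ℝ | a * (elu t + 1) + b * (elu (-t) + 1) + c * Real.tanh t = 0} = 0 := by
  have hsub : {t : ℝ | a * (elu t + 1) + b * (elu (-t) + 1) + c * Real.tanh t = 0} ⊆
      {t : ℝ | Gfun a b c t = 0} ∪ (Neg.neg '' {s : ℝ | Gfun b a (-c) s = 0}) := by
    intro t ht
    simp only [mem_setOf_eq] at ht
    rcases le_or_gt 0 t with h0 | h0
    · left
      show Gfun a b c t = 0
      rw [Gfun, ← tanh_formula]
      rw [elu_of_nonneg h0, elu_of_nonpos (by linarith)] at ht
      linear_combination ht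
    · right
      refine ⟨-t, ?_, by simp⟩
      show Gfun b a (-c) (-t) = 0
      rw [Gfun, ← tanh_formula, Real.tanh_neg, neg_neg]
      rw [elu_of_nonpos h0.le, elu_of_nonneg (by linarith)] at ht
      linear_combination ht
  refine measure_mono_null hsub (measure_union_null ?_ ?_)
  · exact (Gfun_zeroset_countable h).measure_zero _
  · refine Set.Countable.measure_zero ?_ _
    refine Set.Countable.image ?_ _
    apply Gfun_zeroset_countable
    rintro ⟨hb, ha, hc⟩
    exact h ⟨ha, hb, by simpa using hc⟩
open scoped ENNReal
open MeasureTheory Filter Set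

lemma slice_null {ι : Type*} [Fintype ι] [DecidableEq ι] (i : ι) (T : Set (ι → ℝ))
    (hT : MeasurableSet T)
    (h : ∀ x : ι → ℝ, volume {t : ℝ | Function.update x i t ∈ T} = 0) :
    volume T = 0 := by
  classical
  let p : ι → Prop := fun j => j ≠ i
  haveI : Unique {j // ¬ p j} :=
    { default := ⟨i, by simp [p]⟩,
      uniq := fun a => Subtype.ext (not_not.mp a.2) }
  let e := MeasurableEquiv.piEquivPiSubtypeProd (fun _ : ι => ℝ) p
  have hmp := volume_preserving_piEquivPiSubtypeProd (fun _ : ι => ℝ) p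
  have hS : MeasurableSet (e.symm ⁻¹' T) := e.symm.measurable hT
  have hvol : volume T = volume (e.symm ⁻¹' T) := by
    rw [← hmp.measure_preimage hS.nullMeasurableSet]
    rw [← Set.preimage_comp]
    rw [show (⇑e.symm ∘ ⇑(MeasurableEquiv.piEquivPiSubtypeProd (fun _ : ι => ℝ) p)) = id from
      funext fun x => e.symm_apply_apply x]
    rw [Set.preimage_id]
  rw [hvol]
  rw [show (volume : Measure ((({j // p j} → ℝ)) × ({j // ¬ p j} → ℝ)))
      = (volume : Measure ({j // p j} → ℝ)).prod (volume : Measure ({j // ¬ p j} → ℝ)) from rfl]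
  rw [Measure.measure_prod_null hS]
  refine Filter.Eventually.of_forall fun w => ?_
  show volume (Prod.mk w ⁻¹' (⇑e.symm ⁻¹' T)) = (0 : (Subtype p → ℝ) → ℝ≥0∞) w
  show volume (Prod.mk w ⁻¹' (⇑e.symm ⁻¹' T)) = 0
  set x : ι → ℝ := e.symm (w, fun _ => (0:ℝ)) with hx
  have hslice : (Prod.mk w ⁻¹' (e.symm ⁻¹' T)) =
      (MeasurableEquiv.funUnique {j // ¬ p j} ℝ) ⁻¹' {t : ℝ | Function.update x i t ∈ T} := by
    ext u
    have hu : e.symm (w, u) = Function.update x i (u default) := by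
      funext j
      show (Equiv.piEquivPiSubtypeProd p (fun _ : ι => ℝ)).symm (w, u) j = _
      rw [Equiv.piEquivPiSubtypeProd_symm_apply]
      by_cases hj : p j
      · rw [dif_pos hj, Function.update_of_ne hj]
        show _ = (Equiv.piEquivPiSubtypeProd p (fun _ : ι => ℝ)).symm (w, fun _ => (0:ℝ)) j
        rw [Equiv.piEquivPiSubtypeProd_symm_apply, dif_pos hj]
      · rw [dif_neg hj]
        have : j = i := not_not.mp hj
        subst this
        rw [Function.update_self]
        exact congrArg u (Subsingleton.elim _ _)
    simp only [Set.mem_preimage, Set.mem_setOf_eq, MeasurableEquiv.funUnique_apply]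
    rw [hu]
  rw [hslice]
  have hms : NullMeasurableSet {t : ℝ | Function.update x i t ∈ T} (volume) :=
    ((measurable_update x) hT).nullMeasurableSet
  have hFin : (Subtype.fintype fun j => ¬p j) = (Unique.fintype : Fintype {j // ¬ p j}) :=
    Subsingleton.elim _ _
  rw [show (volume : Measure ({j // ¬ p j} → ℝ)) =
      @volume _ (@MeasureSpace.pi {j // ¬ p j} Unique.fintype (fun _ => ℝ)
        fun _ => Real.measureSpace) from by rw [← hFin]]
  exact ((volume_preserving_funUnique {j // ¬ p j} ℝ).measure_preimage
    hms).trans (h x)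

/-- For almost every `x ∈ ℝ^N` (with `N ≥ 3`), the componentwise evaluations
of the feature maps `f₁(t) = elu(t) + 1`, `f₂(t) = elu(-t) + 1`, and
`f₃(t) = tanh(t)` at `x` are linearly independent vectors of `ℝ^N`: the set
of `x` where they are linearly dependent has Lebesgue measure zero. -/
theorem feature_maps_ae_linearIndependent
    (f₁ f₂ f₃ : ℝ → ℝ)
    (hf₁ : ∀ t, f₁ t = elu t + 1)
    (hf₂ : ∀ t, f₂ t = elu (-t) + 1)
    (hf₃ : ∀ t, f₃ t = Real.tanh t)
    (N : ℕ) (hN : 3 ≤ N) :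
    MeasureTheory.volume
      {x : Fin N → ℝ | ¬ LinearIndependent ℝ
        ![fun i => f₁ (x i), fun i => f₂ (x i), fun i => f₃ (x i)]} = 0 := by
  classical
  have hc₁ : Continuous f₁ := by
    have : f₁ = fun t => elu t + 1 := funext hf₁
    rw [this]; exact continuous_elu.add continuous_const
  have hc₂ : Continuous f₂ := by
    have : f₂ = fun t => elu (-t) + 1 := funext hf₂
    rw [this]; exact (continuous_elu.comp continuous_neg).add continuous_const
  have hc₃ : Continuous f₃ := by
    have : f₃ = fun t => Real.tanh t := funext hf₃
    rw [this]
    have : (fun t => Real.tanh t) = fun t => Real.sinh t / Real.cosh t := by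
      funext t; exact Real.tanh_eq_sinh_div_cosh t
    rw [this]
    exact Real.continuous_sinh.div Real.continuous_cosh fun x => (Real.cosh_pos x).ne'
  set i₀ : Fin N := ⟨0, by omega⟩
  set i₁ : Fin N := ⟨1, by omega⟩
  set i₂ : Fin N := ⟨2, by omega⟩
  have h01 : i₀ ≠ i₁ := by simp [i₀, i₁, Fin.ext_iff]
  have h02 : i₀ ≠ i₂ := by simp [i₀, i₂, Fin.ext_iff]
  have h12 : i₁ ≠ i₂ := by simp [i₁, i₂, Fin.ext_iff]
  set A : (Fin N → ℝ) → ℝ := fun x => f₂ (x i₀) * f₃ (x i₁) - f₃ (x i₀) * f₂ (x i₁) with hA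
  set B : (Fin N → ℝ) → ℝ := fun x => f₃ (x i₀) * f₁ (x i₁) - f₁ (x i₀) * f₃ (x i₁) with hB
  set C : (Fin N → ℝ) → ℝ := fun x => f₁ (x i₀) * f₂ (x i₁) - f₂ (x i₀) * f₁ (x i₁) with hC
  have hcA : Continuous A := by fun_prop
  have hcB : Continuous B := by fun_prop
  have hcC : Continuous C := by fun_prop
  set T₁ : Set (Fin N → ℝ) := {x | A x = 0} with hT₁
  set T₂ : Set (Fin N → ℝ) := {x | ¬(A x = 0 ∧ B x = 0 ∧ C x = 0) ∧
      A x * f₁ (x i₂) + B x * f₂ (x i₂) + C x * f₃ (x i₂) = 0} with hT₂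
  have hmT₁ : MeasurableSet T₁ := (hcA.measurable (measurableSet_singleton 0) : _)
  have hmT₂ : MeasurableSet T₂ := by
    apply MeasurableSet.inter
    · apply MeasurableSet.compl
      exact ((hcA.measurable (measurableSet_singleton 0)).inter
        ((hcB.measurable (measurableSet_singleton 0)).inter
          (hcC.measurable (measurableSet_singleton 0))))
    · have hcF : Continuous (fun x : Fin N → ℝ =>
          A x * f₁ (x i₂) + B x * f₂ (x i₂) + C x * f₃ (x i₂)) := by fun_prop
      exact hcF.measurable (measurableSet_singleton 0)
  have hsub : {x : Fin N → ℝ | ¬ LinearIndependent ℝ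
      ![fun i => f₁ (x i), fun i => f₂ (x i), fun i => f₃ (x i)]} ⊆ T₁ ∪ T₂ := by
    intro x hx
    simp only [mem_setOf_eq] at hx
    rw [Fintype.not_linearIndependent_iff] at hx
    obtain ⟨g, hsum, k, hk⟩ := hx
    by_cases hA0 : A x = 0
    · exact Or.inl hA0
    right
    refine ⟨fun h => hA0 h.1, ?_⟩
    have hdet : (Matrix.of ![![f₁ (x i₀), f₁ (x i₁), f₁ (x i₂)],
        ![f₂ (x i₀), f₂ (x i₁), f₂ (x i₂)],
        ![f₃ (x i₀), f₃ (x i₁), f₃ (x i₂)]]).det = 0 := by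
      rw [← Matrix.exists_vecMul_eq_zero_iff]
      refine ⟨g, fun h0 => hk (congrFun h0 k), ?_⟩
      funext j
      have hev : ∀ i : Fin N,
          g 0 * f₁ (x i) + g 1 * f₂ (x i) + g 2 * f₃ (x i) = 0 := by
        intro i
        have := congrFun hsum i
        simpa [Fin.sum_univ_three, Finset.sum_apply] using this
      fin_cases j <;>
        simp [Matrix.vecMul, dotProduct, Fin.sum_univ_three] <;>
        [exact hev i₀; exact hev i₁; exact hev i₂]
    rw [Matrix.det_fin_three] at hdet
    simp only [Matrix.of_apply, Matrix.cons_val', Matrix.cons_val_zero, Matrix.cons_val_one,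
      Matrix.head_cons, Matrix.cons_val_two, Matrix.tail_cons, Matrix.empty_val',
      Matrix.cons_val_fin_one, Matrix.head_fin_const] at hdet
    show A x * f₁ (x i₂) + B x * f₂ (x i₂) + C x * f₃ (x i₂) = 0
    rw [hA, hB, hC]
    linear_combination hdet
  refine measure_mono_null hsub (measure_union_null ?_ ?_)
  · -- T₁ via slicing at i₁
    apply slice_null i₁ T₁ hmT₁
    intro x
    have hpos : f₂ (x i₀) ≠ 0 := by rw [hf₂]; exact (elu_add_one_pos _).ne'
    refine measure_mono_null (fun t ht => ?_) (combo_null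
      (a := 0) (b := -f₃ (x i₀)) (c := f₂ (x i₀)) (fun h => hpos h.2.2))
    simp only [mem_setOf_eq] at ht ⊢
    rw [hT₁] at ht
    simp only [mem_setOf_eq, hA] at ht
    rw [Function.update_of_ne h01, Function.update_self] at ht
    rw [hf₂ t, hf₃ t] at ht
    linear_combination ht
  · -- T₂ via slicing at i₂
    apply slice_null i₂ T₂ hmT₂
    intro x
    by_cases hall : A x = 0 ∧ B x = 0 ∧ C x = 0
    · convert measure_empty
      · ext t
        simp only [mem_setOf_eq, hT₂, mem_empty_iff_false, iff_false]
        rintro ⟨hne, -⟩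
        exact hne (by
          have e0 : Function.update x i₂ t i₀ = x i₀ := Function.update_of_ne h02 _ _
          have e1 : Function.update x i₂ t i₁ = x i₁ := Function.update_of_ne h12 _ _
          constructor
          · rw [hA]; simp only [e0, e1]; exact hall.1
          constructor
          · rw [hB]; simp only [e0, e1]; exact hall.2.1
          · rw [hC]; simp only [e0, e1]; exact hall.2.2)
      · infer_instance
    · refine measure_mono_null (fun t ht => ?_) (combo_null
        (a := A x) (b := B x) (c := C x) hall)
      simp only [mem_setOf_eq, hT₂] at ht ⊢
      have e0 : Function.update x i₂ t i₀ = x i₀ := Function.update_of_ne h02 _ _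
      have e1 : Function.update x i₂ t i₁ = x i₁ := Function.update_of_ne h12 _ _
      have e2 : Function.update x i₂ t i₂ = t := Function.update_self _ _ _
      obtain ⟨-, heq⟩ := ht
      rw [hA, hB, hC] at heq ⊢
      simp only [e0, e1, e2] at heq
      rw [hf₁ t, hf₂ t, hf₃ t] at heq
      linear_combination heq
end
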